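/- (Lemma 4.1, difference of discrete and continuous Kalman gains.) Let g : ℝ^d → ℝ^p be Lipschitz with constant L and C ∈ ℝ^{p×p} symmetric positive definite. There exists a constant κ > 0, depending only on L and ‖C⁻¹‖, such that for every M ≥ 2, every h ≥ 0 and any two ensembles X^(1),…,X^(M) and Y^(1),…,Y^(M) in ℝ^d, the discrete gain K_X := (1/(M−1)) E_X 𝒢_Xᵀ (C + (h/(M−1)) 𝒢_X 𝒢_Xᵀ)⁻¹ and the continuous gain K_Y := (1/(M−1)) E_Y 𝒢_Yᵀ C⁻¹ satisfy ‖K_X − K_Y‖ ≤ κ ( h · tr(P_X)² + (tr(P_X)^{1/2} + tr(P_Y)^{1/2}) · ((1/(M−1)) Σ_{i=1}^M ‖X^(i) − Y^(i)‖²)^{1/2} ). -/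

import Mathlib

open Matrix MeasureTheory
open scoped Matrix.Norms.L2Operator NNReal RealInnerProductSpace

/-- The ensemble mean `x̄ = (1/M) ∑ᵢ X⁽ⁱ⁾`. -/
noncomputable def ensMean {d M : ℕ} (X : Fin M → EuclideanSpace ℝ (Fin d)) :
    EuclideanSpace ℝ (Fin d) :=
  (M : ℝ)⁻¹ • ∑ i, X i

/-- The matrix of ensemble deviations, with columns `X⁽ⁱ⁾ − x̄`. -/
noncomputable def devMat {d M : ℕ} (X : Fin M → EuclideanSpace ℝ (Fin d)) :
    Matrix (Fin d) (Fin M) ℝ :=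
  Matrix.of fun j i => (X i - ensMean X) j

/-- The trace of the empirical covariance matrix,
`tr(P) = (1/(M−1)) ∑ᵢ ‖X⁽ⁱ⁾ − x̄‖²`. -/
noncomputable def trP {d M : ℕ} (X : Fin M → EuclideanSpace ℝ (Fin d)) : ℝ :=
  ((M : ℝ) - 1)⁻¹ * ∑ i, ‖X i - ensMean X‖ ^ 2

/-!
With the normalized deviation matrices `Ẽ = (M - 1)^(-1/2) E` the two gains read
`K_X = Ẽ_X G̃_Xᵀ (C + h G̃_X G̃_Xᵀ)⁻¹` and `K_Y = Ẽ_Y G̃_Yᵀ C⁻¹`, and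
`K_X - K_Y = Ẽ_X G̃_Xᵀ ((C + P)⁻¹ - C⁻¹) + (Ẽ_X G̃_Xᵀ - Ẽ_Y G̃_Yᵀ) C⁻¹` with `P = h G̃_X G̃_Xᵀ ⪰ 0`.
Since `C ≤ C + P` in the Loewner order, `‖(C + P)⁻¹‖ ≤ ‖C⁻¹‖` (Cauchy–Schwarz for the form of `C`),
so the resolvent identity bounds the first term by `h ‖C⁻¹‖² ‖Ẽ_X‖ ‖G̃_X‖³`; the second is bilinear
in the deviations. A deviation matrix is bounded by its Frobenius norm, the empirical root mean
square of the deviations about the mean, and the mean minimizes this over all centres; hence the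
Lipschitz bound on `g` carries `√tr(P_X)` and `√((M - 1)⁻¹ ∑ ‖X⁽ⁱ⁾ - Y⁽ⁱ⁾‖²)` over to the images.
-/

namespace ContinuousLinearMap

variable {E : Type*} [NormedAddCommGroup E] [InnerProductSpace ℝ E]

theorem IsPositive.norm_sq_le_opNorm_rightInv_mul_inner {T S : E →L[ℝ] E} (hT : T.IsPositive)
    (hTS : T * S = 1) (x : E) : ‖x‖ ^ 2 ≤ ‖S‖ * ⟪T x, x⟫ := by
  have hTSx : T (S x) = x := congr($hTS x)
  -- Cauchy–Schwarz for the form `⟪T ·, ·⟫` at `x` and `S x`, where it pairs to `‖x‖ ^ 2`.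
  have hcs := LinearMap.BilinForm.apply_mul_apply_le_of_forall_zero_le
    (innerₗ E ∘ₗ (T : E →ₗ[ℝ] E)) hT.inner_nonneg_left x (S x)
  simp only [LinearMap.comp_apply, innerₗ_apply_apply, coe_coe, hTSx,
    hT.inner_left_eq_inner_right x (S x), real_inner_self_eq_norm_sq] at hcs
  have hS : ⟪x, S x⟫ ≤ ‖S‖ * ‖x‖ ^ 2 := by
    calc ⟪x, S x⟫ ≤ ‖x‖ * ‖S x‖ := real_inner_le_norm _ _
      _ ≤ ‖x‖ * (‖S‖ * ‖x‖) := by gcongr; exact S.le_opNorm x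
      _ = ‖S‖ * ‖x‖ ^ 2 := by ring
  rcases (norm_nonneg x).eq_or_lt with hx | hx
  · rw [← hx]; simpa using mul_nonneg (norm_nonneg S) (hT.inner_nonneg_left x)
  · nlinarith [hT.inner_nonneg_left x, pow_pos hx 2]

theorem IsPositive.opNorm_rightInv_le_of_le {T T' S S' : E →L[ℝ] E} (hT : T.IsPositive)
    (hle : T ≤ T') (hTS : T * S = 1) (hTS' : T' * S' = 1) : ‖S'‖ ≤ ‖S‖ := by
  refine S'.opNorm_le_bound (norm_nonneg S) fun y => ?_
  set x := S' y
  have hx : ‖x‖ ^ 2 ≤ ‖S‖ * (‖y‖ * ‖x‖) :=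
    calc ‖x‖ ^ 2 ≤ ‖S‖ * ⟪T x, x⟫ := hT.norm_sq_le_opNorm_rightInv_mul_inner hTS x
      _ ≤ ‖S‖ * ⟪T' x, x⟫ := by
        gcongr
        simpa [inner_sub_left] using hle.inner_nonneg_left x
      _ = ‖S‖ * ⟪y, x⟫ := by rw [show T' x = y from congr($hTS' y)]
      _ ≤ ‖S‖ * (‖y‖ * ‖x‖) := by gcongr; exact real_inner_le_norm y x
  rcases (norm_nonneg x).eq_or_lt with h0 | h0
  · rw [← h0]; positivity
  · nlinarith

end ContinuousLinearMap

namespace Matrix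

variable {m n k : Type*} [Fintype m] [Fintype n] [Fintype k] [DecidableEq n]

theorem l2_opNorm_le_sqrt_sum_sq (A : Matrix m n ℝ) : ‖A‖ ≤ √(∑ i, ∑ j, A i j ^ 2) := by
  rw [l2_opNorm_def]
  refine ContinuousLinearMap.opNorm_le_bound _ (Real.sqrt_nonneg _) fun x => ?_
  rw [← Real.sqrt_sq (norm_nonneg x), ← Real.sqrt_mul (by positivity),
    Real.le_sqrt (norm_nonneg _) (by positivity), EuclideanSpace.norm_sq_eq,
    EuclideanSpace.norm_sq_eq, Finset.sum_mul]
  refine Finset.sum_le_sum fun i _ => ?_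
  simpa [mulVec, dotProduct] using
    Finset.sum_mul_sq_le_sq_mul_sq Finset.univ (A i) x

theorem l2_opNorm_transpose [DecidableEq m] (A : Matrix m n ℝ) : ‖Aᵀ‖ = ‖A‖ := by
  rw [← conjTranspose_eq_transpose_of_trivial, l2_opNorm_conjTranspose]

theorem l2_opNorm_mul_transpose_self [DecidableEq m] (A : Matrix m n ℝ) : ‖A * Aᵀ‖ = ‖A‖ ^ 2 := by
  simpa [sq, l2_opNorm_transpose] using l2_opNorm_conjTranspose_mul_self Aᵀ

theorem PosSemidef.isPositive_toEuclideanCLM {A : Matrix n n ℝ} (hA : A.PosSemidef) :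
    (toEuclideanCLM (𝕜 := ℝ) A).IsPositive := by
  rw [← ContinuousLinearMap.isPositive_toLinearMap_iff, coe_toEuclideanCLM_eq_toEuclideanLin]
  exact isPositive_toEuclideanLin_iff.mpr hA

theorem toEuclideanCLM_mul_inv {𝕜 : Type*} [RCLike 𝕜] {A : Matrix n n 𝕜} (hA : IsUnit A) :
    toEuclideanCLM (𝕜 := 𝕜) A * toEuclideanCLM (𝕜 := 𝕜) A⁻¹ = 1 := by
  rw [← map_mul, mul_nonsing_inv _ ((isUnit_iff_isUnit_det A).mp hA), map_one]

theorem PosDef.l2_opNorm_inv_add_le {C P : Matrix n n ℝ} (hC : C.PosDef) (hP : P.PosSemidef) :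
    ‖(C + P)⁻¹‖ ≤ ‖C⁻¹‖ :=
  hC.posSemidef.isPositive_toEuclideanCLM.opNorm_rightInv_le_of_le
    (by rw [ContinuousLinearMap.le_def, ← map_sub, add_sub_cancel_left]
        exact hP.isPositive_toEuclideanCLM)
    (toEuclideanCLM_mul_inv hC.isUnit) (toEuclideanCLM_mul_inv (hC.add_posSemidef hP).isUnit)

theorem PosDef.l2_opNorm_inv_add_sub_inv_le {C P : Matrix n n ℝ} (hC : C.PosDef)
    (hP : P.PosSemidef) : ‖(C + P)⁻¹ - C⁻¹‖ ≤ ‖C⁻¹‖ ^ 2 * ‖P‖ := by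
  have hCP := hC.add_posSemidef hP
  rw [inv_sub_inv (iff_of_true hCP.isUnit hC.isUnit), sub_add_cancel_left]
  calc ‖(C + P)⁻¹ * -P * C⁻¹‖ ≤ ‖(C + P)⁻¹‖ * ‖P‖ * ‖C⁻¹‖ := by
        simpa using norm_mul₃_le (a := (C + P)⁻¹) (b := -P) (c := C⁻¹)
    _ ≤ ‖C⁻¹‖ * ‖P‖ * ‖C⁻¹‖ := by gcongr; exact hC.l2_opNorm_inv_add_le hP
    _ = ‖C⁻¹‖ ^ 2 * ‖P‖ := by ring

theorem l2_opNorm_mul_transpose_sub_le [DecidableEq m] [DecidableEq k] (A A' : Matrix m k ℝ)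
    (F F' : Matrix n k ℝ) : ‖A * Fᵀ - A' * F'ᵀ‖ ≤ ‖A‖ * ‖F - F'‖ + ‖A - A'‖ * ‖F'‖ := by
  have hsplit : A * Fᵀ - A' * F'ᵀ = A * (F - F')ᵀ + (A - A') * F'ᵀ := by
    rw [transpose_sub, Matrix.mul_sub, Matrix.sub_mul]; abel
  rw [hsplit]
  refine (norm_add_le _ _).trans (add_le_add ?_ ?_)
  · simpa only [l2_opNorm_transpose] using l2_opNorm_mul A (F - F')ᵀ
  · simpa only [l2_opNorm_transpose] using l2_opNorm_mul (A - A') F'ᵀ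

theorem l2_opNorm_kalmanGain_sub_le [DecidableEq m] [DecidableEq k] (A A' : Matrix m k ℝ)
    (F F' : Matrix n k ℝ) {C : Matrix n n ℝ} (hC : C.PosDef) {h : ℝ} (hh : 0 ≤ h) :
    ‖A * Fᵀ * (C + h • (F * Fᵀ))⁻¹ - A' * F'ᵀ * C⁻¹‖ ≤
      h * ‖C⁻¹‖ ^ 2 * ‖A‖ * ‖F‖ ^ 3 + ‖C⁻¹‖ * (‖A‖ * ‖F - F'‖ + ‖A - A'‖ * ‖F'‖) := by
  set P := h • (F * Fᵀ)
  have hP : P.PosSemidef := by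
    simpa using (posSemidef_self_mul_conjTranspose F).smul hh
  have hsplit : A * Fᵀ * (C + P)⁻¹ - A' * F'ᵀ * C⁻¹ =
      A * Fᵀ * ((C + P)⁻¹ - C⁻¹) + (A * Fᵀ - A' * F'ᵀ) * C⁻¹ := by
    rw [Matrix.mul_sub, Matrix.sub_mul]; abel
  rw [hsplit]
  refine (norm_add_le _ _).trans (add_le_add ?_ ?_)
  · calc ‖A * Fᵀ * ((C + P)⁻¹ - C⁻¹)‖ ≤ ‖A‖ * ‖Fᵀ‖ * ‖(C + P)⁻¹ - C⁻¹‖ :=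
          (l2_opNorm_mul _ _).trans (by gcongr; exact l2_opNorm_mul _ _)
      _ ≤ ‖A‖ * ‖F‖ * (‖C⁻¹‖ ^ 2 * (h * ‖F‖ ^ 2)) := by
          rw [l2_opNorm_transpose]
          gcongr
          refine (hC.l2_opNorm_inv_add_sub_inv_le hP).trans ?_
          gcongr
          rw [norm_smul, l2_opNorm_mul_transpose_self, Real.norm_of_nonneg hh]
      _ = h * ‖C⁻¹‖ ^ 2 * ‖A‖ * ‖F‖ ^ 3 := by ring
  · calc ‖(A * Fᵀ - A' * F'ᵀ) * C⁻¹‖ ≤ ‖A * Fᵀ - A' * F'ᵀ‖ * ‖C⁻¹‖ := l2_opNorm_mul _ _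
      _ ≤ (‖A‖ * ‖F - F'‖ + ‖A - A'‖ * ‖F'‖) * ‖C⁻¹‖ := by
          gcongr; exact l2_opNorm_mul_transpose_sub_le A A' F F'
      _ = ‖C⁻¹‖ * (‖A‖ * ‖F - F'‖ + ‖A - A'‖ * ‖F'‖) := mul_comm _ _

end Matrix

theorem LipschitzWith.sqrt_mul_sum_norm_sub_sq_le {ι E F : Type*} [Fintype ι]
    [SeminormedAddCommGroup E] [SeminormedAddCommGroup F] {L : ℝ≥0} {g : E → F}
    (hg : LipschitzWith L g) (c : ℝ) (V W : ι → E) :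
    √(c * ∑ i, ‖g (V i) - g (W i)‖ ^ 2) ≤ L * √(c * ∑ i, ‖V i - W i‖ ^ 2) := by
  rw [Real.sqrt_mul' _ (by positivity), Real.sqrt_mul' _ (by positivity), mul_left_comm]
  gcongr
  rw [← Real.sqrt_sq L.coe_nonneg, ← Real.sqrt_mul (by positivity), Finset.mul_sum]
  gcongr with i
  rw [← mul_pow]
  gcongr
  exact hg.norm_sub_le _ _

section Ensemble

variable {d M : ℕ}

theorem sum_sub_ensMean (V : Fin M → EuclideanSpace ℝ (Fin d)) : ∑ i, (V i - ensMean V) = 0 := by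
  rcases Nat.eq_zero_or_pos M with rfl | hM
  · simp
  · rw [Finset.sum_sub_distrib, Finset.sum_const, Finset.card_univ, Fintype.card_fin, ensMean,
      ← Nat.cast_smul_eq_nsmul ℝ, smul_smul, mul_inv_cancel₀ (by positivity), one_smul, sub_self]

theorem sum_norm_sub_ensMean_sq_le (V : Fin M → EuclideanSpace ℝ (Fin d))
    (b : EuclideanSpace ℝ (Fin d)) : ∑ i, ‖V i - ensMean V‖ ^ 2 ≤ ∑ i, ‖V i - b‖ ^ 2 := by
  have hcross : ∑ i, ⟪V i - ensMean V, ensMean V - b⟫ = 0 := by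
    rw [← sum_inner, sum_sub_ensMean, inner_zero_left]
  calc ∑ i, ‖V i - ensMean V‖ ^ 2
      ≤ ∑ i, (‖V i - ensMean V‖ ^ 2 + 2 * ⟪V i - ensMean V, ensMean V - b⟫
          + ‖ensMean V - b‖ ^ 2) := by
        rw [Finset.sum_add_distrib, Finset.sum_add_distrib, ← Finset.mul_sum, hcross, mul_zero,
          add_zero]
        exact le_add_of_nonneg_right (by positivity)
    _ = ∑ i, ‖V i - b‖ ^ 2 := by
        congr with i
        rw [← norm_add_sq_real, sub_add_sub_cancel]

theorem norm_devMat_le (V : Fin M → EuclideanSpace ℝ (Fin d)) (b : EuclideanSpace ℝ (Fin d)) :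
    ‖devMat V‖ ≤ √(∑ i, ‖V i - b‖ ^ 2) :=
  calc ‖devMat V‖ ≤ √(∑ j, ∑ i, devMat V j i ^ 2) := l2_opNorm_le_sqrt_sum_sq _
    _ = √(∑ i, ‖V i - ensMean V‖ ^ 2) := by
        rw [Finset.sum_comm]
        simp [devMat, EuclideanSpace.norm_sq_eq]
    _ ≤ √(∑ i, ‖V i - b‖ ^ 2) := Real.sqrt_le_sqrt (sum_norm_sub_ensMean_sq_le V b)

theorem devMat_sub (X Y : Fin M → EuclideanSpace ℝ (Fin d)) :
    devMat X - devMat Y = devMat (X - Y) := by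
  have hmean : ensMean (X - Y) = ensMean X - ensMean Y := by
    simp [ensMean, Finset.sum_sub_distrib, smul_sub]
  ext j i
  simp only [devMat, hmean, Matrix.sub_apply, of_apply, Pi.sub_apply, PiLp.sub_apply]
  ring

noncomputable def normalizedDevMat (X : Fin M → EuclideanSpace ℝ (Fin d)) :
    Matrix (Fin d) (Fin M) ℝ :=
  (√((M : ℝ) - 1))⁻¹ • devMat X

theorem smul_devMat_mul_transpose {p : ℕ} (hM : 1 ≤ M) (X : Fin M → EuclideanSpace ℝ (Fin d))
    (Y : Fin M → EuclideanSpace ℝ (Fin p)) :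
    ((M : ℝ) - 1)⁻¹ • (devMat X * (devMat Y)ᵀ) = normalizedDevMat X * (normalizedDevMat Y)ᵀ := by
  have hM' : (0 : ℝ) ≤ M - 1 := sub_nonneg.mpr (by exact_mod_cast hM)
  rw [normalizedDevMat, normalizedDevMat, transpose_smul, Matrix.smul_mul, Matrix.mul_smul,
    smul_smul, ← mul_inv, Real.mul_self_sqrt hM']

theorem normalizedDevMat_sub (X Y : Fin M → EuclideanSpace ℝ (Fin d)) :
    normalizedDevMat X - normalizedDevMat Y = normalizedDevMat (X - Y) := by
  rw [normalizedDevMat, normalizedDevMat, normalizedDevMat, ← smul_sub, devMat_sub]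

theorem norm_normalizedDevMat_le (V : Fin M → EuclideanSpace ℝ (Fin d))
    (b : EuclideanSpace ℝ (Fin d)) :
    ‖normalizedDevMat V‖ ≤ √(((M : ℝ) - 1)⁻¹ * ∑ i, ‖V i - b‖ ^ 2) := by
  rw [normalizedDevMat, norm_smul, Real.sqrt_mul' _ (by positivity), Real.sqrt_inv, norm_inv,
    Real.norm_of_nonneg (Real.sqrt_nonneg _)]
  gcongr
  exact norm_devMat_le V b

theorem trP_nonneg (X : Fin M → EuclideanSpace ℝ (Fin d)) : 0 ≤ trP X := by
  rcases M with _ | M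
  · simp [trP]
  · exact mul_nonneg (by simp) (by positivity)

theorem norm_normalizedDevMat_comp_le {p : ℕ} {L : ℝ≥0}
    {g : EuclideanSpace ℝ (Fin d) → EuclideanSpace ℝ (Fin p)} (hg : LipschitzWith L g)
    (X : Fin M → EuclideanSpace ℝ (Fin d)) :
    ‖normalizedDevMat (g ∘ X)‖ ≤ L * √(trP X) :=
  (norm_normalizedDevMat_le (g ∘ X) (g (ensMean X))).trans
    (hg.sqrt_mul_sum_norm_sub_sq_le _ X fun _ => ensMean X)

theorem norm_normalizedDevMat_comp_sub_le {p : ℕ} {L : ℝ≥0}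
    {g : EuclideanSpace ℝ (Fin d) → EuclideanSpace ℝ (Fin p)} (hg : LipschitzWith L g)
    (X Y : Fin M → EuclideanSpace ℝ (Fin d)) :
    ‖normalizedDevMat (g ∘ X) - normalizedDevMat (g ∘ Y)‖ ≤
      L * √(((M : ℝ) - 1)⁻¹ * ∑ i, ‖X i - Y i‖ ^ 2) := by
  rw [normalizedDevMat_sub]
  refine (norm_normalizedDevMat_le _ 0).trans ?_
  simpa using hg.sqrt_mul_sum_norm_sub_sq_le (((M : ℝ) - 1)⁻¹) X Y

end Ensemble

/-- Lemma 4.1, difference of discrete and continuous Kalman gains: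
there is a constant `κ > 0` (depending only on the Lipschitz constant `L` of `g` and
`‖C⁻¹‖`) such that for all ensemble sizes `M ≥ 2`, all `h ≥ 0` and all ensembles `X, Y`,
`‖K_X − K_Y‖ ≤ κ (h tr(P_X)² + (tr(P_X)^{1/2} + tr(P_Y)^{1/2})
((1/(M−1)) ∑ᵢ ‖X⁽ⁱ⁾ − Y⁽ⁱ⁾‖²)^{1/2})`. -/
theorem kalman_gain_difference_bound {d p : ℕ} (L : ℝ≥0)
    (g : EuclideanSpace ℝ (Fin d) → EuclideanSpace ℝ (Fin p)) (hg : LipschitzWith L g)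
    (C : Matrix (Fin p) (Fin p) ℝ) (hC : C.PosDef) :
    ∃ κ : ℝ, 0 < κ ∧ ∀ (M : ℕ), 2 ≤ M → ∀ h : ℝ, 0 ≤ h →
      ∀ X Y : Fin M → EuclideanSpace ℝ (Fin d),
      ‖(((M : ℝ) - 1)⁻¹ • (devMat X * (devMat (g ∘ X))ᵀ)) *
            (C + (h / ((M : ℝ) - 1)) • (devMat (g ∘ X) * (devMat (g ∘ X))ᵀ))⁻¹ -
          ((M : ℝ) - 1)⁻¹ • (devMat Y * (devMat (g ∘ Y))ᵀ * C⁻¹)‖ ≤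
        κ * (h * trP X ^ 2 + (Real.sqrt (trP X) + Real.sqrt (trP Y)) *
          Real.sqrt (((M : ℝ) - 1)⁻¹ * ∑ i, ‖X i - Y i‖ ^ 2)) := by
  set c := ‖C⁻¹‖
  refine ⟨L ^ 3 * c ^ 2 + L * c + 1, by positivity, fun M hM h hh X Y => ?_⟩
  have hM1 : 1 ≤ M := by omega
  rw [div_eq_mul_inv, mul_smul, smul_devMat_mul_transpose hM1, smul_devMat_mul_transpose hM1,
    ← Matrix.smul_mul _ (devMat Y * _), smul_devMat_mul_transpose hM1]
  refine (l2_opNorm_kalmanGain_sub_le _ _ _ _ hC hh).trans ?_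
  set e := √(((M : ℝ) - 1)⁻¹ * ∑ i, ‖X i - Y i‖ ^ 2)
  have hEX : ‖normalizedDevMat X‖ ≤ √(trP X) := norm_normalizedDevMat_le X (ensMean X)
  have hGX := norm_normalizedDevMat_comp_le hg X
  have hGY := norm_normalizedDevMat_comp_le hg Y
  have hdE : ‖normalizedDevMat X - normalizedDevMat Y‖ ≤ e := by
    simpa [normalizedDevMat_sub] using norm_normalizedDevMat_le (X - Y) 0
  have hdG := norm_normalizedDevMat_comp_sub_le hg X Y
  have htr : √(trP X) ^ 2 = trP X := Real.sq_sqrt (trP_nonneg X)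
  set a := √(trP X)
  set b := √(trP Y)
  calc _ ≤ h * c ^ 2 * a * (L * a) ^ 3 + c * (a * (L * e) + e * (L * b)) := by gcongr
    _ = L ^ 3 * c ^ 2 * (h * trP X ^ 2) + L * c * ((a + b) * e) := by rw [← htr]; ring
    _ ≤ _ := by
      have hu : 0 ≤ h * trP X ^ 2 := by positivity
      have hv : 0 ≤ (a + b) * e := by positivity
      nlinarith [mul_nonneg (by positivity : (0 : ℝ) ≤ L ^ 3 * c ^ 2) hv,
        mul_nonneg (by positivity : (0 : ℝ) ≤ L * c) hu]
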